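/- arXiv:2202.01524 — 2 statements merged into one kernel-verified Lean document; each statement's English description precedes it below -/
import Mathlib

section
/- Let $1 \le \Gamma \le 5/3$, $a_\infty^2 > 0$, and define $D = \frac{3}{4\Gamma}(\Gamma-1)^2(9\Gamma-7) + 3(5-3\Gamma)$. If $x > 0$ satisfies $x \le \dfrac{2a_\infty^2}{5-3\Gamma + \frac{3x(\Gamma-1)^2(9\Gamma-7)}{4\Gamma(1+3x)}}$ (with the denominator positive), then $x \le \dfrac{4a_\infty^2}{5-3\Gamma - 6a_\infty^2 + \sqrt{(5-3\Gamma-6a_\infty^2)^2 + 8a_\infty^2 D}}$. -/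
theorem biquadratic_bound (Γ ainf2 x : ℝ)
    (hΓ1 : 1 ≤ Γ) (hΓ2 : Γ ≤ 5 / 3) (hainf : 0 < ainf2) (hx : 0 < x)
    (hden : 0 < 5 - 3 * Γ + 3 * x * (Γ - 1) ^ 2 * (9 * Γ - 7) / (4 * Γ * (1 + 3 * x)))
    (hineq : x ≤ 2 * ainf2 /
      (5 - 3 * Γ + 3 * x * (Γ - 1) ^ 2 * (9 * Γ - 7) / (4 * Γ * (1 + 3 * x)))) :
    x ≤ 4 * ainf2 /
      (5 - 3 * Γ - 6 * ainf2 +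
        Real.sqrt ((5 - 3 * Γ - 6 * ainf2) ^ 2 +
          8 * ainf2 * (3 / (4 * Γ) * (Γ - 1) ^ 2 * (9 * Γ - 7) + 3 * (5 - 3 * Γ)))) := by
  have hΓpos : (0:ℝ) < Γ := by linarith
  have hx3 : (0:ℝ) < 1 + 3 * x := by linarith
  set A : ℝ := 3 / (4 * Γ) * (Γ - 1) ^ 2 * (9 * Γ - 7) + 3 * (5 - 3 * Γ) with hAdef
  set B : ℝ := 5 - 3 * Γ - 6 * ainf2 with hBdef
  have h4 : (0:ℝ) < 4 * Γ * (1 + 3 * x) := by positivity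
  have hA : 0 < A := by
    have h1 : 0 < 3 * (Γ - 1) ^ 2 * (9 * Γ - 7) + 12 * Γ * (5 - 3 * Γ) := by
      nlinarith [sq_nonneg (Γ - 1), sq_nonneg (Γ - 5/3)]
    have h2 : A = (3 * (Γ - 1) ^ 2 * (9 * Γ - 7) + 12 * Γ * (5 - 3 * Γ)) / (4 * Γ) := by
      rw [hAdef]; field_simp; ring
    rw [h2]; positivity
  have hmul : x * (5 - 3 * Γ + 3 * x * (Γ - 1) ^ 2 * (9 * Γ - 7) / (4 * Γ * (1 + 3 * x)))
      ≤ 2 * ainf2 := (le_div_iff₀ hden).mp hineq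
  have hmul2 : x * ((5 - 3 * Γ) * (4 * Γ * (1 + 3 * x)) + 3 * x * (Γ - 1) ^ 2 * (9 * Γ - 7))
      ≤ 2 * ainf2 * (4 * Γ * (1 + 3 * x)) := by
    have h6 := mul_le_mul_of_nonneg_right hmul h4.le
    calc x * ((5 - 3 * Γ) * (4 * Γ * (1 + 3 * x)) + 3 * x * (Γ - 1) ^ 2 * (9 * Γ - 7))
        = x * (5 - 3 * Γ + 3 * x * (Γ - 1) ^ 2 * (9 * Γ - 7) / (4 * Γ * (1 + 3 * x)))
          * (4 * Γ * (1 + 3 * x)) := by field_simp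
      _ ≤ _ := h6
  have heq : (A * x ^ 2 + B * x - 2 * ainf2) * (4 * Γ) =
      x * ((5 - 3 * Γ) * (4 * Γ * (1 + 3 * x)) + 3 * x * (Γ - 1) ^ 2 * (9 * Γ - 7))
        - 2 * ainf2 * (4 * Γ * (1 + 3 * x)) := by
    rw [hAdef, hBdef]; field_simp; ring
  have h5 : (A * x ^ 2 + B * x - 2 * ainf2) * (4 * Γ) ≤ 0 := by
    rw [heq]; linarith
  have hquad : A * x ^ 2 + B * x - 2 * ainf2 ≤ 0 := by
    have h4' : (0:ℝ) < 4 * Γ := by linarith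
    have := le_of_mul_le_mul_right
      (by linarith : (A * x ^ 2 + B * x - 2 * ainf2) * (4 * Γ) ≤ 0 * (4 * Γ)) h4'
    linarith
  clear_value A B
  clear hAdef hBdef heq h5 hmul hmul2 hineq hden
  have key : (2 * A * x + B) ^ 2 ≤ B ^ 2 + 8 * ainf2 * A := by
    nlinarith [mul_nonneg hA.le (by linarith : (0:ℝ) ≤ 2 * ainf2 - A * x ^ 2 - B * x)]
  set s : ℝ := Real.sqrt (B ^ 2 + 8 * ainf2 * A) with hsdef
  have hpos : (0:ℝ) < B ^ 2 + 8 * ainf2 * A := by positivity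
  have hs2 : s ^ 2 = B ^ 2 + 8 * ainf2 * A := Real.sq_sqrt hpos.le
  have hsnn : 0 ≤ s := Real.sqrt_nonneg _
  clear_value s
  have hsB : -B < s := by nlinarith [mul_pos hainf hA, hs2, hsnn]
  have hBs : 0 < B + s := by linarith
  have h2Ax : 2 * A * x + B ≤ s := by
    rcases le_or_gt (2 * A * x + B) 0 with h | h
    · linarith
    · nlinarith [key, hs2, hsnn, h]
  rw [le_div_iff₀ hBs]
  have h7 : 0 ≤ (B + s) * (s - B - 2 * A * x) :=
    mul_nonneg hBs.le (by linarith)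
  have h8 : 2 * A * (x * (B + s)) ≤ 2 * A * (4 * ainf2) := by nlinarith [h7, hs2]
  have := le_of_mul_le_mul_left h8 (by linarith : (0:ℝ) < 2 * A)
  linarith
end

section
/- Let $\Gamma \in (1,2]$ and $0 < a_\infty^2 < \Gamma - 1$. The number $a_\ast^2 = \frac{6\Gamma-7}{9} + \frac{2(3\Gamma-2)}{9}\cos\left[\frac{\pi}{3} + \frac{1}{3}\arccos\left(\frac{G + 486(\Gamma-1)a_\infty^2 - 243 a_\infty^4}{2(3\Gamma-2)^3}\right)\right]$, with $G = 54\Gamma^3 - 351\Gamma^2 + 558\Gamma - 259$, satisfies the cubic equation $\frac{3a_\ast^6}{(\Gamma-1)^2} + a_\ast^4\frac{-6\Gamma+7}{(\Gamma-1)^2} + a_\ast^2\frac{3\Gamma-5}{\Gamma-1} + 1 - \left(1 - \frac{a_\infty^2}{\Gamma-1}\right)^2 = 0$, provided the argument of the arccosine lies in $[-1,1]$. -/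
/-!
Shifting by $h = (6\Gamma-7)/9$ depresses the cubic to $3(t^3 - 3m^2 t) + N/243$ with
$m = (3\Gamma-2)/9$ and $N$ the numerator of the arccosine's argument $y = N/(1458\,m^3)$.
Viète's substitution $t = 2m\cos\theta$ gives $t^3 - 3m^2t = 2m^3\cos 3\theta$, and the choice
$\theta = \pi/3 + \tfrac13\arccos y$ makes $\cos 3\theta = -y$, so the constant term cancels.
-/

open Real

theorem cos_three_mul_pi_div_three_add_arccos_div_three {y : ℝ} (hy₁ : -1 ≤ y) (hy₂ : y ≤ 1) :
    cos (3 * (π / 3 + 1 / 3 * arccos y)) = -y := by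
  have hθ : 3 * (π / 3 + 1 / 3 * arccos y) = arccos y + π := by ring
  rw [hθ, cos_add_pi, cos_arccos hy₁ hy₂]

theorem two_mul_cos_cubic (m θ : ℝ) :
    (2 * m * cos θ) ^ 3 - 3 * m ^ 2 * (2 * m * cos θ) = 2 * m ^ 3 * cos (3 * θ) := by
  rw [cos_three_mul]
  ring

theorem sonic_cubic_eq_depressed {Γ : ℝ} (hΓ : Γ ≠ 1) (a x : ℝ) :
    3 * x ^ 3 / (Γ - 1) ^ 2 + x ^ 2 * (-6 * Γ + 7) / (Γ - 1) ^ 2 +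
        x * (3 * Γ - 5) / (Γ - 1) + 1 - (1 - a / (Γ - 1)) ^ 2 =
      (3 * ((x - (6 * Γ - 7) / 9) ^ 3 - 3 * ((3 * Γ - 2) / 9) ^ 2 * (x - (6 * Γ - 7) / 9)) +
        ((54 * Γ ^ 3 - 351 * Γ ^ 2 + 558 * Γ - 259) + 486 * (Γ - 1) * a - 243 * a ^ 2) / 243) /
        (Γ - 1) ^ 2 := by
  have hΓ' : Γ - 1 ≠ 0 := sub_ne_zero.mpr hΓ
  field_simp
  ring

theorem trig_root_of_cubic_general (Γ ainf2 : ℝ)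
    (hΓ1 : 1 < Γ)
    (harg : -1 ≤ ((54 * Γ ^ 3 - 351 * Γ ^ 2 + 558 * Γ - 259)
        + 486 * (Γ - 1) * ainf2 - 243 * ainf2 ^ 2) / (2 * (3 * Γ - 2) ^ 3) ∧
      ((54 * Γ ^ 3 - 351 * Γ ^ 2 + 558 * Γ - 259)
        + 486 * (Γ - 1) * ainf2 - 243 * ainf2 ^ 2) / (2 * (3 * Γ - 2) ^ 3) ≤ 1) :
    let ast2 := (6 * Γ - 7) / 9 + 2 * (3 * Γ - 2) / 9 *
      Real.cos (Real.pi / 3 + 1 / 3 *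
        Real.arccos (((54 * Γ ^ 3 - 351 * Γ ^ 2 + 558 * Γ - 259)
          + 486 * (Γ - 1) * ainf2 - 243 * ainf2 ^ 2) / (2 * (3 * Γ - 2) ^ 3)))
    3 * ast2 ^ 3 / (Γ - 1) ^ 2 + ast2 ^ 2 * (-6 * Γ + 7) / (Γ - 1) ^ 2 +
      ast2 * (3 * Γ - 5) / (Γ - 1) + 1 - (1 - ainf2 / (Γ - 1)) ^ 2 = 0 := by
  intro ast2
  set N := (54 * Γ ^ 3 - 351 * Γ ^ 2 + 558 * Γ - 259) + 486 * (Γ - 1) * ainf2 - 243 * ainf2 ^ 2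
  set θ := π / 3 + 1 / 3 * arccos (N / (2 * (3 * Γ - 2) ^ 3))
  have hm : 3 * Γ - 2 ≠ 0 := by linarith
  have hshift : ast2 - (6 * Γ - 7) / 9 = 2 * ((3 * Γ - 2) / 9) * cos θ := by
    simp only [ast2]
    ring
  have hcos : cos (3 * θ) = -(N / (2 * (3 * Γ - 2) ^ 3)) :=
    cos_three_mul_pi_div_three_add_arccos_div_three harg.1 harg.2
  rw [sonic_cubic_eq_depressed hΓ1.ne' ainf2 ast2, hshift, two_mul_cos_cubic, hcos]
  field_simp
  ring

theorem trig_root_of_cubic (Γ ainf2 : ℝ)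
    (hΓ1 : 1 < Γ) (hΓ2 : Γ ≤ 2) (hainf0 : 0 < ainf2) (hainf : ainf2 < Γ - 1)
    (harg : -1 ≤ ((54 * Γ ^ 3 - 351 * Γ ^ 2 + 558 * Γ - 259)
        + 486 * (Γ - 1) * ainf2 - 243 * ainf2 ^ 2) / (2 * (3 * Γ - 2) ^ 3) ∧
      ((54 * Γ ^ 3 - 351 * Γ ^ 2 + 558 * Γ - 259)
        + 486 * (Γ - 1) * ainf2 - 243 * ainf2 ^ 2) / (2 * (3 * Γ - 2) ^ 3) ≤ 1) :
    let ast2 := (6 * Γ - 7) / 9 + 2 * (3 * Γ - 2) / 9 *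
      Real.cos (Real.pi / 3 + 1 / 3 *
        Real.arccos (((54 * Γ ^ 3 - 351 * Γ ^ 2 + 558 * Γ - 259)
          + 486 * (Γ - 1) * ainf2 - 243 * ainf2 ^ 2) / (2 * (3 * Γ - 2) ^ 3)))
    3 * ast2 ^ 3 / (Γ - 1) ^ 2 + ast2 ^ 2 * (-6 * Γ + 7) / (Γ - 1) ^ 2 +
      ast2 * (3 * Γ - 5) / (Γ - 1) + 1 - (1 - ainf2 / (Γ - 1)) ^ 2 = 0 :=
  trig_root_of_cubic_general Γ ainf2 hΓ1 harg
end
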